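/- Let L ∈ ℝ^{n×n} be unit lower triangular, let 1 ≤ j < k ≤ n, let μ ∈ ℤ, and set L̄ = L(I − μ e_k e_j^T). Let x̂ ∈ ℝ^n and define ẑ ∈ ℝ^n by ẑ_i = x̂_i for i ≠ j and ẑ_j = x̂_j − μ x̂_k. Let x, z ∈ ℝ^n satisfy z_i = x_i for all i ≠ j and z_j = x_j − μ x_k. Define the conditional estimates x̄ from (L, x̂, x) and z̄ from (L̄, ẑ, z) by the downward recursion. Then z_j − z̄_j = x_j − x̄_j, z̄_i = x̄_i for all i < j, and z_i − z̄_i = x_i − x̄_i for every i = 1, …, n. Consequently, each term (z_i − z̄_i)²/d_i of the transformed sum-of-squares objective equals the corresponding term (x_i − x̄_i)²/d_i of the original objective. -/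

import Mathlib

open Matrix

/-!
Right multiplication by `I - μ e_k e_jᵀ` only changes column `j` of `L`, by `-μ` times column `k`.
Going down the recursion, the residuals `x_t - x̄_t` for `t > i` are therefore unchanged, so
`z̄_i - x̄_i = z_i - x_i` for `i ≠ j`. At `i = j` the extra terms collapse, because `L` is unit
lower triangular and `j < k`, to `-μ (x̂_k + Σ_{t ≥ k} l_{tk} (x_t - x̄_t)) = -μ x_k`, which is
again `z_j - x_j`.
-/

open Finset

theorem Matrix.mul_one_sub_smul_single_apply {ι R : Type*} [Fintype ι] [DecidableEq ι]
    [CommRing R] (L : Matrix ι ι R) (c : R) (k j t i : ι) :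
    (L * (1 - c • single k j 1) : Matrix ι ι R) t i = L t i - if i = j then c * L t k else 0 := by
  rw [Matrix.mul_sub, Matrix.mul_one, sub_apply, Matrix.mul_smul, smul_apply, smul_eq_mul]
  split_ifs with h
  · subst h
    rw [mul_single_apply_same, mul_one]
  · rw [mul_single_apply_of_ne 1 k j t i h, mul_zero]

theorem Finset.sum_Ioi_eq_add_sum_Ioi {ι M : Type*} [LinearOrder ι] [LocallyFiniteOrderTop ι]
    [AddCommMonoid M] {f : ι → M} {j k : ι} (hjk : j < k) (hf : ∀ t, t < k → f t = 0) :
    ∑ t ∈ Ioi j, f t = f k + ∑ t ∈ Ioi k, f t := by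
  have hsub : Ici k ⊆ Ioi j := fun t ht => mem_Ioi.mpr (hjk.trans_le (mem_Ici.mp ht))
  rw [← sum_subset hsub fun t _ ht => hf t (by simpa using ht), Ici_eq_cons_Ioi, sum_cons]

section ConditionalEstimates

variable {R : Type*} [CommRing R] {n : ℕ}

def IsCondEst (L : Matrix (Fin n) (Fin n) R) (xhat x xbar : Fin n → R) : Prop :=
  ∀ i, xbar i = xhat i + ∑ t ∈ Ioi i, L t i * (x t - xbar t)

variable {L : Matrix (Fin n) (Fin n) R} {j k : Fin n} {μ : R} {xhat zhat x z xbar zbar : Fin n → R}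

theorem IsCondEst.sub_eq_sub_of_residual_eq (hLlow : ∀ i j : Fin n, i < j → L i j = 0)
    (hLdiag : ∀ i, L i i = 1) (hjk : j < k)
    (hzhat : ∀ i, zhat i = if i = j then xhat j - μ * xhat k else xhat i)
    (hxz : ∀ i, i ≠ j → z i = x i) (hzj : z j = x j - μ * x k)
    (hx : IsCondEst L xhat x xbar) (hz : IsCondEst (L * (1 - μ • single k j 1)) zhat z zbar)
    (i : Fin n) (hres : ∀ t, i < t → z t - zbar t = x t - xbar t) :
    zbar i - xbar i = z i - x i := by
  have hsum : ∑ t ∈ Ioi i, (L * (1 - μ • single k j 1) : Matrix (Fin n) (Fin n) R) t i * (z t - zbar t)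
      = ∑ t ∈ Ioi i, (L t i - if i = j then μ * L t k else 0) * (x t - xbar t) :=
    sum_congr rfl fun t ht => by
      rw [mul_one_sub_smul_single_apply, hres t (mem_Ioi.mp ht)]
  rw [hz i, hx i, hsum, hzhat]
  split_ifs with hij
  · subst hij
    have hcol : ∑ t ∈ Ioi i, L t k * (x t - xbar t)
        = (x k - xbar k) + ∑ t ∈ Ioi k, L t k * (x t - xbar t) := by
      rw [sum_Ioi_eq_add_sum_Ioi hjk fun t ht => by rw [hLlow t k ht, zero_mul], hLdiag, one_mul]
    simp only [sub_mul, sum_sub_distrib, mul_assoc, ← mul_sum, hcol]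
    linear_combination μ * hx k - hzj
  · simp only [sub_zero, hxz i hij, sub_self]

theorem IsCondEst.residual_eq (hLlow : ∀ i j : Fin n, i < j → L i j = 0)
    (hLdiag : ∀ i, L i i = 1) (hjk : j < k)
    (hzhat : ∀ i, zhat i = if i = j then xhat j - μ * xhat k else xhat i)
    (hxz : ∀ i, i ≠ j → z i = x i) (hzj : z j = x j - μ * x k)
    (hx : IsCondEst L xhat x xbar) (hz : IsCondEst (L * (1 - μ • single k j 1)) zhat z zbar)
    (i : Fin n) : z i - zbar i = x i - xbar i := by
  induction i using WellFoundedGT.induction with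
  | _ i ih =>
    linear_combination
      -hx.sub_eq_sub_of_residual_eq hLlow hLdiag hjk hzhat hxz hzj hz i fun t ht => ih t ht

end ConditionalEstimates

theorem stmt_13_general (n : ℕ) (L : Matrix (Fin n) (Fin n) ℝ)
    (hLlow : ∀ i j : Fin n, i < j → L i j = 0) (hLdiag : ∀ i, L i i = 1)
    (j k : Fin n) (hjk : j < k) (μ : ℤ)
    (Lbar : Matrix (Fin n) (Fin n) ℝ)
    (hLbar : Lbar = L * (1 - (μ : ℝ) • Matrix.single k j 1))
    (xhat zhat : Fin n → ℝ)
    (hzhat : ∀ i, zhat i = if i = j then xhat j - (μ : ℝ) * xhat k else xhat i)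
    (x z : Fin n → ℝ)
    (hxz : ∀ i, i ≠ j → z i = x i) (hzj : z j = x j - (μ : ℝ) * x k)
    (xbar zbar : Fin n → ℝ)
    (hxbar : ∀ i, xbar i = xhat i + ∑ t ∈ Finset.Ioi i, L t i * (x t - xbar t))
    (hzbar : ∀ i, zbar i = zhat i + ∑ t ∈ Finset.Ioi i, Lbar t i * (z t - zbar t))
    (d : Fin n → ℝ) :
    z j - zbar j = x j - xbar j ∧
    (∀ i, i < j → zbar i = xbar i) ∧
    (∀ i, z i - zbar i = x i - xbar i) ∧
    (∀ i, (z i - zbar i) ^ 2 / d i = (x i - xbar i) ^ 2 / d i) := by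
  subst hLbar
  have hres := IsCondEst.residual_eq hLlow hLdiag hjk hzhat hxz hzj hxbar hzbar
  refine ⟨hres j, fun i hij => ?_, hres, fun i => by rw [hres i]⟩
  linear_combination hxz i hij.ne - hres i

/-- Effect of a lower triangular IGT on the whole search objective: with
`L̄ = L(I - μ e_k e_jᵀ)` (`j < k`), `ẑ_j = x̂_j - μ x̂_k` (other entries unchanged),
`z_j = x_j - μ x_k` and `z_i = x_i` for `i ≠ j`, the conditional estimates satisfy
`z_j - z̄_j = x_j - x̄_j`, `z̄_i = x̄_i` for `i < j`, `z_i - z̄_i = x_i - x̄_i` for all `i`,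
and hence each term `(z_i - z̄_i)²/d_i` of the objective is unchanged. -/
theorem stmt_13 (n : ℕ) (L : Matrix (Fin n) (Fin n) ℝ)
    (hLlow : ∀ i j : Fin n, i < j → L i j = 0) (hLdiag : ∀ i, L i i = 1)
    (j k : Fin n) (hjk : j < k) (μ : ℤ)
    (Lbar : Matrix (Fin n) (Fin n) ℝ)
    (hLbar : Lbar = L * (1 - (μ : ℝ) • Matrix.single k j 1))
    (xhat zhat : Fin n → ℝ)
    (hzhat : ∀ i, zhat i = if i = j then xhat j - (μ : ℝ) * xhat k else xhat i)
    (x z : Fin n → ℝ)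
    (hxz : ∀ i, i ≠ j → z i = x i) (hzj : z j = x j - (μ : ℝ) * x k)
    (xbar zbar : Fin n → ℝ)
    (hxbar : ∀ i, xbar i = xhat i + ∑ t ∈ Finset.Ioi i, L t i * (x t - xbar t))
    (hzbar : ∀ i, zbar i = zhat i + ∑ t ∈ Finset.Ioi i, Lbar t i * (z t - zbar t))
    (d : Fin n → ℝ) (hd : ∀ i, 0 < d i) :
    z j - zbar j = x j - xbar j ∧
    (∀ i, i < j → zbar i = xbar i) ∧
    (∀ i, z i - zbar i = x i - xbar i) ∧
    (∀ i, (z i - zbar i) ^ 2 / d i = (x i - xbar i) ^ 2 / d i) :=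
  stmt_13_general n L hLlow hLdiag j k hjk μ Lbar hLbar xhat zhat hzhat x z hxz hzj xbar zbar hxbar
    hzbar d
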